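/- arXiv:2404.09409 — 2 statements merged into one kernel-verified Lean document; each statement's English description precedes it below -/
import Mathlib

section
/- Consider the mixed even p-spin short-range model, i.e., assume every hyperedge in E has an even number of vertices. Let i ≠ j be vertices in [N] and n ∈ ℤ_+^E. If the Fourier–Hermite coefficient φ̂_{ij}(n) = E[⟨σ_i σ_j⟩ h_n(J)] is nonzero, then i, j ∈ V(n) and there exists a Berge path from i to j in the sub-hypergraph G(n) = (V(n), E(n)). In particular, |E(n)| ≥ d(i,j). -/
open MeasureTheory ProbabilityTheory Real Finset

noncomputable section

/-! ### Basic objects: spins, Hermite polynomials, Gaussian measures -/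

/-- The `±1` spin value attached to a Boolean. -/
def spin (b : Bool) : ℝ := if b then 1 else -1

/-- Normalized Hermite polynomial `h_m = He_m / √(m!)`,
orthonormal w.r.t. the standard Gaussian measure. -/
def hermiteFn (m : ℕ) (x : ℝ) : ℝ :=
  Polynomial.aeval x (Polynomial.hermite m) / Real.sqrt (Nat.factorial m)

/-- The law of a family of i.i.d. standard Gaussians over a finite index set. -/
def gaussianPi (ι : Type*) [Fintype ι] : Measure (ι → ℝ) :=
  Measure.pi fun _ => gaussianReal 0 1

instance (ι : Type*) [Fintype ι] : IsProbabilityMeasure (gaussianPi ι) := by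
  unfold gaussianPi; infer_instance

/-- Tensorized normalized Hermite polynomial `h_n(x) = ∏_e h_{n_e}(x_e)`. -/
def hermiteProd {ι : Type*} [Fintype ι] (n : ι → ℕ) (x : ι → ℝ) : ℝ :=
  ∏ e, hermiteFn (n e) (x e)

/-- Continuous perturbation `J(t) = e^{-t} J + √(1-e^{-2t}) J'` of the disorder. -/
def contPerturb {ι : Type*} (t : ℝ) (J J' : ι → ℝ) : ι → ℝ := fun e =>
  Real.exp (-t) * J e + Real.sqrt (1 - Real.exp (-2 * t)) * J' e

/-- Discrete perturbation `J(t)_e = B_e J_e + (1-B_e) J'_e` of the disorder. -/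
def discPerturb {ι : Type*} (J J' : ι → ℝ) (B : ι → Bool) : ι → ℝ := fun e =>
  if B e then J e else J' e

/-- Bernoulli measure on `Bool` with success probability `p`. -/
def berBool (p : ℝ) : Measure Bool :=
  ENNReal.ofReal p • Measure.dirac true + ENNReal.ofReal (1 - p) • Measure.dirac false

instance (p : ℝ) : IsFiniteMeasure (berBool p) := by
  constructor
  simp only [berBool, Measure.coe_add, Pi.add_apply, Measure.smul_apply, smul_eq_mul,
    Measure.dirac_apply' _ MeasurableSet.univ, Set.indicator_univ, Pi.one_apply, mul_one]
  exact ENNReal.add_lt_top.mpr ⟨ENNReal.ofReal_lt_top, ENNReal.ofReal_lt_top⟩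

/-- Product Gaussian measure for a pair `(J, J')` of independent disorders. -/
def pairGauss (ι : Type*) [Fintype ι] : Measure ((ι → ℝ) × (ι → ℝ)) :=
  (gaussianPi ι).prod (gaussianPi ι)

/-- Product Gaussian measure for a triple of independent disorders. -/
def tripleGauss (ι : Type*) [Fintype ι] : Measure ((ι → ℝ) × (ι → ℝ) × (ι → ℝ)) :=
  (gaussianPi ι).prod ((gaussianPi ι).prod (gaussianPi ι))

/-- Law of `(J, J', B)`: two independent Gaussian disorders together with i.i.d.
Bernoulli(`p`) variables. -/
def tripleGaussBer (ι : Type*) [Fintype ι] (p : ℝ) :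
    Measure ((ι → ℝ) × (ι → ℝ) × (ι → Bool)) :=
  (gaussianPi ι).prod ((gaussianPi ι).prod (Measure.pi fun _ => berBool p))

/-! ### Spin models on hypergraphs -/

variable {N : ℕ}

/-- `σ_e = ∏_{v ∈ e} σ_v`. -/
def sigEdge (σ : Fin N → Bool) (e : Finset (Fin N)) : ℝ := ∏ v ∈ e, spin (σ v)

/-- Hamiltonian `H_J(σ) = Σ_e ρ_{|e|}(J_e) σ_e` of the short-range model. -/
def ham (Edges : Finset (Finset (Fin N))) (ρ : ℕ → ℝ → ℝ)
    (J : Finset (Fin N) → ℝ) (σ : Fin N → Bool) : ℝ :=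
  ∑ e ∈ Edges, ρ e.card (J e) * sigEdge σ e

/-- Gibbs average of an observable `f` for the Hamiltonian `H` at inverse temperature `β`. -/
def gibbs (β : ℝ) (H : (Fin N → Bool) → ℝ) (f : (Fin N → Bool) → ℝ) : ℝ :=
  (∑ σ : Fin N → Bool, f σ * Real.exp (β * H σ)) / ∑ σ : Fin N → Bool, Real.exp (β * H σ)

/-- Gibbs average of a two-replica observable `f(σ,τ)` where `σ, τ` are sampled from the
product of the Gibbs measures of the Hamiltonians `H₁`, `H₂`. -/
def gibbs2 (β : ℝ) (H₁ H₂ : (Fin N → Bool) → ℝ)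
    (f : (Fin N → Bool) → (Fin N → Bool) → ℝ) : ℝ :=
  (∑ σ : Fin N → Bool, ∑ τ : Fin N → Bool, f σ τ * Real.exp (β * H₁ σ + β * H₂ τ)) /
    ∑ σ : Fin N → Bool, ∑ τ : Fin N → Bool, Real.exp (β * H₁ σ + β * H₂ τ)

/-- Site overlap `R(σ,τ) = N⁻¹ Σ_i σ_i τ_i`. -/
def overlap (σ τ : Fin N → Bool) : ℝ := (∑ i, spin (σ i) * spin (τ i)) / N

/-- Fourier–Hermite coefficient `φ̂_{ij}(n) = E[⟨σ_i σ_j⟩ h_n(J)]` of the two-point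
correlation function. -/
def twoPointCoeff (Edges : Finset (Finset (Fin N))) (ρ : ℕ → ℝ → ℝ) (β : ℝ)
    (i j : Fin N) (n : Finset (Fin N) → ℕ) : ℝ :=
  ∫ ω, gibbs β (ham Edges ρ ω) (fun σ => spin (σ i) * spin (σ j)) * hermiteProd n ω
    ∂gaussianPi (Finset (Fin N))

/-- `E(n) = {e : n_e > 0}`. -/
def Esupp (n : Finset (Fin N) → ℕ) : Finset (Finset (Fin N)) :=
  Finset.univ.filter fun e => n e ≠ 0

/-- `V(n)`: the vertices covered by `E(n)`. -/
def Vsupp (n : Finset (Fin N) → ℕ) : Finset (Fin N) :=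
  (Esupp n).biUnion id

/-- Disorder-averaged two-replica observable under the continuous perturbation:
`E ⟨f(σ,τ)⟩_t` with `σ ~ G_J`, `τ ~ G_{J(t)}`. -/
def contExp (Edges : Finset (Finset (Fin N))) (ρ : ℕ → ℝ → ℝ) (β t : ℝ)
    (f : (Fin N → Bool) → (Fin N → Bool) → ℝ) : ℝ :=
  ∫ ω : (Finset (Fin N) → ℝ) × (Finset (Fin N) → ℝ),
    gibbs2 β (ham Edges ρ ω.1) (ham Edges ρ (contPerturb t ω.1 ω.2)) f
    ∂pairGauss (Finset (Fin N))

/-- Disorder-averaged two-replica observable under the discrete perturbation. -/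
def discExp (Edges : Finset (Finset (Fin N))) (ρ : ℕ → ℝ → ℝ) (β t : ℝ)
    (f : (Fin N → Bool) → (Fin N → Bool) → ℝ) : ℝ :=
  ∫ ω : (Finset (Fin N) → ℝ) × (Finset (Fin N) → ℝ) × (Finset (Fin N) → Bool),
    gibbs2 β (ham Edges ρ ω.1) (ham Edges ρ (discPerturb ω.1 ω.2.1 ω.2.2)) f
    ∂tripleGaussBer (Finset (Fin N)) (Real.exp (-t))

/-! ### Berge paths, distance, balls, cycles -/

/-- `(vs, es)` is a Berge path of length `ℓ` from `v` to `w` in the hypergraph `Edges`. -/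
def IsBergePath (Edges : Finset (Finset (Fin N))) (ℓ : ℕ)
    (vs : Fin (ℓ + 1) → Fin N) (es : Fin ℓ → Finset (Fin N)) (v w : Fin N) : Prop :=
  Function.Injective vs ∧ Function.Injective es ∧ (∀ k, es k ∈ Edges) ∧
    vs 0 = v ∧ vs (Fin.last ℓ) = w ∧
    ∀ k : Fin ℓ, vs k.castSucc ∈ es k ∧ vs k.succ ∈ es k

/-- Hypergraph (Berge) distance between two vertices, `∞` if there is no path. -/
def hdist (Edges : Finset (Finset (Fin N))) (v w : Fin N) : ℕ∞ :=
  sInf {d : ℕ∞ | ∃ (ℓ : ℕ) (vs : Fin (ℓ + 1) → Fin N) (es : Fin ℓ → Finset (Fin N)),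
    IsBergePath Edges ℓ vs es v w ∧ d = (ℓ : ℕ∞)}

open scoped Classical in
/-- The closed ball `B_r(v)` in the hypergraph distance. -/
def hball (Edges : Finset (Finset (Fin N))) (v : Fin N) (r : ℕ) : Finset (Fin N) :=
  Finset.univ.filter fun w => hdist Edges v w ≤ (r : ℕ∞)

/-- The hypergraph `Edges` contains a Berge cycle. -/
def HasBergeCycle (Edges : Finset (Finset (Fin N))) : Prop :=
  ∃ (ℓ : ℕ) (vs : Fin ℓ → Fin N) (es : Fin ℓ → Finset (Fin N)),
    2 ≤ ℓ ∧ Function.Injective vs ∧ Function.Injective es ∧ (∀ k, es k ∈ Edges) ∧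
      ∀ k : Fin ℓ, vs k ∈ es k ∧ vs (finRotate ℓ k) ∈ es k

/-- `min(d, c)` where `d ∈ ℕ∞` and `c ∈ ℝ` (equal to `c` if `d = ∞`). -/
def truncMin (d : ℕ∞) (c : ℝ) : ℝ :=
  if d = ⊤ then c else min (d.toNat : ℝ) c

/-! ### The diluted mixed p-spin random hypergraph -/

/-- Probability that a given hyperedge is present in the diluted model. -/
def edgeProb (α : ℕ → ℝ) (Δ N : ℕ) (e : Finset (Fin N)) : ℝ :=
  if 2 ≤ e.card ∧ e.card ≤ Δ then α e.card * N / (N.choose e.card) else 0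

/-- The law of the diluted mixed `p`-spin random hypergraph: each hyperedge `e` with
`2 ≤ |e| ≤ Δ` is present independently with probability `α_{|e|} N / C(N,|e|)`. -/
def graphMeasure (α : ℕ → ℝ) (Δ N : ℕ) : Measure (Finset (Fin N) → Bool) :=
  Measure.pi fun e => berBool (edgeProb α Δ N e)

/-- The (random) hyperedge set determined by the indicator `g`. -/
def edgesOf {N : ℕ} (Δ : ℕ) (g : Finset (Fin N) → Bool) : Finset (Finset (Fin N)) :=
  Finset.univ.filter fun e => g e = true ∧ 2 ≤ e.card ∧ e.card ≤ Δ

/-- `λ = Σ_p p(p-1) α_p`. -/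
def lamMix (α : ℕ → ℝ) (Δ : ℕ) : ℝ :=
  ∑ p ∈ Finset.Icc 2 Δ, (p : ℝ) * ((p : ℝ) - 1) * α p

/-- `λ' = Σ_p p(p-1)(p-2) α_p`. -/
def lamMix' (α : ℕ → ℝ) (Δ : ℕ) : ℝ :=
  ∑ p ∈ Finset.Icc 2 Δ, (p : ℝ) * ((p : ℝ) - 1) * ((p : ℝ) - 2) * α p

/-- The exploration (breadth-first search) process `(R_t, I_t, S_t, E_t)` of a hypergraph
started at the vertex `i`. -/
def explore {N : ℕ} (Edges : Finset (Finset (Fin N))) (i : Fin N) :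
    ℕ → Finset (Fin N) × Finset (Fin N) × Finset (Fin N) × Finset (Finset (Fin N))
  | 0 => (∅, {i}, Finset.univ.erase i, ∅)
  | t + 1 =>
      let P := explore Edges i t
      let Enew := Edges.filter fun e => (e ∩ P.2.1).Nonempty ∧ e ∩ P.1 = ∅
      (P.1 ∪ P.2.1, Enew.biUnion fun e => e ∩ P.2.2.1,
        P.2.2.1 \ Enew.biUnion fun e => e ∩ P.2.2.1, Enew)

/-- The set `I_t` of newly explored vertices at step `t`. -/
def Iset {N : ℕ} (Edges : Finset (Finset (Fin N))) (i : Fin N) (t : ℕ) : Finset (Fin N) :=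
  (explore Edges i t).2.1

/-- Disorder-and-graph-averaged two-replica observable under the continuous perturbation
in the diluted model. -/
def dilContExp (α : ℕ → ℝ) (Δ N : ℕ) (ρ : ℕ → ℝ → ℝ) (β t : ℝ)
    (f : (Fin N → Bool) → (Fin N → Bool) → ℝ) : ℝ :=
  ∫ ω : (Finset (Fin N) → Bool) × (Finset (Fin N) → ℝ) × (Finset (Fin N) → ℝ),
    gibbs2 β (ham (edgesOf Δ ω.1) ρ ω.2.1)
      (ham (edgesOf Δ ω.1) ρ (contPerturb t ω.2.1 ω.2.2)) f
    ∂((graphMeasure α Δ N).prod (pairGauss (Finset (Fin N))))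

/-- Disorder-and-graph-averaged two-replica observable under the discrete perturbation
in the diluted model. -/
def dilDiscExp (α : ℕ → ℝ) (Δ N : ℕ) (ρ : ℕ → ℝ → ℝ) (β t : ℝ)
    (f : (Fin N → Bool) → (Fin N → Bool) → ℝ) : ℝ :=
  ∫ ω : (Finset (Fin N) → Bool) ×
      (Finset (Fin N) → ℝ) × (Finset (Fin N) → ℝ) × (Finset (Fin N) → Bool),
    gibbs2 β (ham (edgesOf Δ ω.1) ρ ω.2.1)
      (ham (edgesOf Δ ω.1) ρ (discPerturb ω.2.1 ω.2.2.1 ω.2.2.2)) f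
    ∂((graphMeasure α Δ N).prod (tripleGaussBer (Finset (Fin N)) (Real.exp (-t))))

/-! ### The Lévy model -/

/-- Hamiltonian of the Lévy model: `H(σ) = a_N⁻¹ Σ_{i,j} ρ(J_{ij}) σ_i σ_j`. -/
def levyHam (N : ℕ) (aN : ℝ) (ρ : ℝ → ℝ) (J : Fin N × Fin N → ℝ) (σ : Fin N → Bool) : ℝ :=
  (∑ p : Fin N × Fin N, ρ (J p) * (spin (σ p.1) * spin (σ p.2))) / aN

/-- The normalization `a_N = inf{x > 0 : P(|ρ(J)| > x) ≤ 1/N}`. -/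
def levyAN (ρ : ℝ → ℝ) (N : ℕ) : ℝ :=
  sInf {x : ℝ | 0 < x ∧ ((gaussianReal 0 1) {j | x < |ρ j|}).toReal ≤ 1 / N}

/-- The coupled free energy `F_N(t,λ)` of the Lévy model, with the two systems
perturbed by the Ornstein–Uhlenbeck flow at time `t`. -/
def levyF (N : ℕ) (β aN lam : ℝ) (ρ : ℝ → ℝ) (t : ℝ) : ℝ :=
  (∫ ω : (Fin N × Fin N → ℝ) × (Fin N × Fin N → ℝ) × (Fin N × Fin N → ℝ),
      Real.log (∑ σ : Fin N → Bool, ∑ τ : Fin N → Bool,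
        Real.exp (β * levyHam N aN ρ (fun p => Real.exp (-t / 2) * ω.1 p +
              Real.sqrt (1 - Real.exp (-t)) * ω.2.1 p) σ +
          β * levyHam N aN ρ (fun p => Real.exp (-t / 2) * ω.1 p +
              Real.sqrt (1 - Real.exp (-t)) * ω.2.2 p) τ +
          lam * N * overlap σ τ ^ 2))
    ∂tripleGauss (Fin N × Fin N)) / N

/-- The coupled free energy `F_N(∞,λ)`: the two systems carry independent disorders. -/
def levyFinf (N : ℕ) (β aN lam : ℝ) (ρ : ℝ → ℝ) : ℝ :=
  (∫ ω : (Fin N × Fin N → ℝ) × (Fin N × Fin N → ℝ) × (Fin N × Fin N → ℝ),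
      Real.log (∑ σ : Fin N → Bool, ∑ τ : Fin N → Bool,
        Real.exp (β * levyHam N aN ρ ω.2.1 σ + β * levyHam N aN ρ ω.2.2 τ +
          lam * N * overlap σ τ ^ 2))
    ∂tripleGauss (Fin N × Fin N)) / N

/-- `φ(t) = Σ_r E[L_r(J¹(t)) L_r(J²(t))]` where `J^i(t) = e^{-t/2} J + √(1-e^{-t}) J^i`. -/
def phiFn (k m : ℕ) (L : Fin m → (Fin k → ℝ) → ℝ) (t : ℝ) : ℝ :=
  ∑ r : Fin m, ∫ ω : (Fin k → ℝ) × (Fin k → ℝ) × (Fin k → ℝ),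
    L r (fun l => Real.exp (-t / 2) * ω.1 l + Real.sqrt (1 - Real.exp (-t)) * ω.2.1 l) *
      L r (fun l => Real.exp (-t / 2) * ω.1 l + Real.sqrt (1 - Real.exp (-t)) * ω.2.2 l)
    ∂tripleGauss (Fin k)


/-! ### Auxiliary lemmas for Statement 1 -/

section Stmt1Aux

lemma hermite_aeval_neg (m : ℕ) (x : ℝ) :
    Polynomial.aeval (-x) (Polynomial.hermite m)
      = (-1 : ℝ) ^ m * Polynomial.aeval x (Polynomial.hermite m) := by
  rw [Polynomial.aeval_eq_sum_range, Polynomial.aeval_eq_sum_range, Finset.mul_sum]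
  refine Finset.sum_congr rfl fun k _ => ?_
  by_cases h : (Polynomial.hermite m).coeff k = 0
  · simp [h]
  · have hek : Even (m + k) := by
      by_contra hodd
      exact h (Polynomial.coeff_hermite_of_odd_add (Nat.not_even_iff_odd.mp hodd))
    have hiff := Nat.even_add.mp hek
    have hpow : (-1 : ℝ) ^ k = (-1 : ℝ) ^ m := by
      rcases Nat.even_or_odd k with hk2 | hk2
      · rw [hk2.neg_one_pow, (hiff.mpr hk2).neg_one_pow]
      · have hm2 : Odd m := by
          rcases Nat.even_or_odd m with hm | hm
          · exact absurd (hiff.mp hm) (Nat.not_even_iff_odd.mpr hk2)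
          · exact hm
        rw [hk2.neg_one_pow, hm2.neg_one_pow]
    rw [neg_pow, hpow, zsmul_eq_mul, zsmul_eq_mul]
    ring

lemma hermiteFn_neg (m : ℕ) (x : ℝ) : hermiteFn m (-x) = (-1 : ℝ) ^ m * hermiteFn m x := by
  unfold hermiteFn
  rw [hermite_aeval_neg, mul_div_assoc]

lemma hermiteFn_sign {t : ℝ} (ht : t = 1 ∨ t = -1) (m : ℕ) (x : ℝ) :
    hermiteFn m (t * x) = t ^ m * hermiteFn m x := by
  rcases ht with h | h
  · rw [h, one_mul, one_pow, one_mul]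
  · rw [h, neg_one_mul, hermiteFn_neg]

lemma integral_gaussianPi_comp_flip {ι : Type*} [Fintype ι] (s : ι → ℝ)
    (hs : ∀ e, s e = 1 ∨ s e = -1) (g : (ι → ℝ) → ℝ) :
    ∫ x, g (fun e => s e * x e) ∂gaussianPi ι = ∫ x, g x ∂gaussianPi ι := by
  have hss : ∀ e, s e * s e = 1 := fun e => by rcases hs e with h | h <;> rw [h] <;> norm_num
  have hmeas : Measurable (fun (x : ι → ℝ) (e : ι) => s e * x e) :=
    measurable_pi_lambda _ fun e => (measurable_pi_apply e).const_mul _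
  let T : (ι → ℝ) ≃ᵐ (ι → ℝ) :=
    { toFun := fun x e => s e * x e
      invFun := fun x e => s e * x e
      left_inv := fun x => funext fun e => by
        show s e * (s e * x e) = x e
        rw [← mul_assoc, hss, one_mul]
      right_inv := fun x => funext fun e => by
        show s e * (s e * x e) = x e
        rw [← mul_assoc, hss, one_mul]
      measurable_toFun := hmeas
      measurable_invFun := hmeas }
  have hcomp : ∀ e : ι, MeasurePreserving (fun x : ℝ => s e * x)
      (gaussianReal 0 1) (gaussianReal 0 1) := by
    intro e
    refine ⟨measurable_id.const_mul _, ?_⟩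
    have := gaussianReal_map_const_mul (μ := 0) (v := 1) (s e)
    rw [show (fun x : ℝ => s e * x) = (s e * ·) from rfl, this, mul_zero]
    congr 1
    rcases hs e with h | h <;> rw [h] <;> ext <;> norm_num
  have hMP : MeasurePreserving T (gaussianPi ι) (gaussianPi ι) := by
    unfold gaussianPi
    exact measurePreserving_pi _ _ hcomp
  exact hMP.integral_comp T.measurableEmbedding g

variable {N : ℕ}

lemma spin_flip (b : Bool) (P : Prop) [Decidable P] :
    spin (xor b (decide P)) = (if P then (-1 : ℝ) else 1) * spin b := by
  by_cases h : P <;> cases b <;> simp [h, spin]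

lemma sigEdge_flip (S : Finset (Fin N)) (σ : Fin N → Bool) (e : Finset (Fin N)) :
    sigEdge (fun v => xor (σ v) (decide (v ∈ S))) e
      = (-1 : ℝ) ^ ((e ∩ S).card) * sigEdge σ e := by
  unfold sigEdge
  calc ∏ v ∈ e, spin (xor (σ v) (decide (v ∈ S)))
      = ∏ v ∈ e, (if v ∈ S then (-1 : ℝ) else 1) * spin (σ v) :=
        Finset.prod_congr rfl fun v _ => spin_flip _ _
    _ = (∏ v ∈ e, if v ∈ S then (-1 : ℝ) else 1) * ∏ v ∈ e, spin (σ v) :=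
        Finset.prod_mul_distrib
    _ = (-1 : ℝ) ^ ((e ∩ S).card) * ∏ v ∈ e, spin (σ v) := by
        congr 1
        rw [Finset.prod_ite, Finset.prod_const, Finset.prod_const, one_pow, mul_one,
          Finset.filter_mem_eq_inter]

lemma ham_flip (Edges : Finset (Finset (Fin N))) (ρ : ℕ → ℝ → ℝ)
    (hρodd : ∀ p x, ρ p (-x) = - ρ p x) (S : Finset (Fin N)) (J : Finset (Fin N) → ℝ)
    (σ : Fin N → Bool) :
    ham Edges ρ (fun e => (-1 : ℝ) ^ ((e ∩ S).card) * J e) σ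
      = ham Edges ρ J (fun v => xor (σ v) (decide (v ∈ S))) := by
  unfold ham
  refine Finset.sum_congr rfl fun e _ => ?_
  rw [sigEdge_flip]
  show ρ e.card ((-1 : ℝ) ^ ((e ∩ S).card) * J e) * sigEdge σ e
      = ρ e.card (J e) * ((-1 : ℝ) ^ ((e ∩ S).card) * sigEdge σ e)
  rcases Nat.even_or_odd ((e ∩ S).card) with h | h
  · rw [h.neg_one_pow, one_mul, one_mul]
  · rw [h.neg_one_pow, neg_one_mul, neg_one_mul, hρodd]; ring

lemma gibbs_comp_flip (β : ℝ) (H : (Fin N → Bool) → ℝ) (S : Finset (Fin N))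
    (f : (Fin N → Bool) → ℝ) :
    gibbs β (fun σ => H (fun v => xor (σ v) (decide (v ∈ S)))) f
      = gibbs β H (fun σ => f (fun v => xor (σ v) (decide (v ∈ S)))) := by
  classical
  have hinv : Function.Involutive
      (fun (σ : Fin N → Bool) (v : Fin N) => xor (σ v) (decide (v ∈ S))) := by
    intro σ; funext v; simp [Bool.xor_assoc]
  have hnum : ∑ σ : Fin N → Bool, f σ * Real.exp (β * H (fun v => xor (σ v) (decide (v ∈ S))))
      = ∑ σ : Fin N → Bool, f (fun v => xor (σ v) (decide (v ∈ S))) * Real.exp (β * H σ) := by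
    refine Fintype.sum_bijective _ hinv.bijective _ _ fun σ => ?_
    dsimp only
    rw [show (fun v => xor (xor (σ v) (decide (v ∈ S))) (decide (v ∈ S))) = σ from hinv σ]
  have hden : ∑ σ : Fin N → Bool, Real.exp (β * H (fun v => xor (σ v) (decide (v ∈ S))))
      = ∑ σ : Fin N → Bool, Real.exp (β * H σ) := by
    refine Fintype.sum_bijective _ hinv.bijective _ _ fun σ => ?_
    dsimp only
  simp only [gibbs]
  rw [hnum, hden]

lemma gibbs_const_mul (β c : ℝ) (H f : (Fin N → Bool) → ℝ) :
    gibbs β H (fun σ => c * f σ) = c * gibbs β H f := by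
  unfold gibbs
  simp only [mul_assoc]
  rw [← Finset.mul_sum, mul_div_assoc]

lemma twoPointCoeff_flip (Edges : Finset (Finset (Fin N))) (ρ : ℕ → ℝ → ℝ)
    (hρodd : ∀ p x, ρ p (-x) = - ρ p x) (β : ℝ) (i j : Fin N)
    (n : Finset (Fin N) → ℕ) (S : Finset (Fin N)) :
    twoPointCoeff Edges ρ β i j n
      = ((if i ∈ S then (-1 : ℝ) else 1) * (if j ∈ S then (-1 : ℝ) else 1) *
          ∏ e : Finset (Fin N), ((-1 : ℝ) ^ ((e ∩ S).card)) ^ (n e)) *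
        twoPointCoeff Edges ρ β i j n := by
  classical
  have hs : ∀ e : Finset (Fin N),
      (-1 : ℝ) ^ ((e ∩ S).card) = 1 ∨ (-1 : ℝ) ^ ((e ∩ S).card) = -1 := fun e => by
    rcases Nat.even_or_odd ((e ∩ S).card) with h | h
    · exact Or.inl h.neg_one_pow
    · exact Or.inr h.neg_one_pow
  have hpt : ∀ ω : Finset (Fin N) → ℝ,
      gibbs β (ham Edges ρ (fun e => (-1 : ℝ) ^ ((e ∩ S).card) * ω e))
          (fun σ => spin (σ i) * spin (σ j)) *
          hermiteProd n (fun e => (-1 : ℝ) ^ ((e ∩ S).card) * ω e)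
        = ((if i ∈ S then (-1 : ℝ) else 1) * (if j ∈ S then (-1 : ℝ) else 1) *
            ∏ e : Finset (Fin N), ((-1 : ℝ) ^ ((e ∩ S).card)) ^ (n e)) *
          (gibbs β (ham Edges ρ ω) (fun σ => spin (σ i) * spin (σ j)) * hermiteProd n ω) := by
    intro ω
    have h1 : ham Edges ρ (fun e => (-1 : ℝ) ^ ((e ∩ S).card) * ω e)
        = fun σ => ham Edges ρ ω (fun v => xor (σ v) (decide (v ∈ S))) :=
      funext fun σ => ham_flip Edges ρ hρodd S ω σ
    have h2 : (fun σ : Fin N → Bool =>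
          spin (xor (σ i) (decide (i ∈ S))) * spin (xor (σ j) (decide (j ∈ S))))
        = fun σ => ((if i ∈ S then (-1 : ℝ) else 1) * (if j ∈ S then (-1 : ℝ) else 1)) *
            (spin (σ i) * spin (σ j)) := by
      funext σ
      rw [spin_flip, spin_flip]; ring
    have h3 : hermiteProd n (fun e => (-1 : ℝ) ^ ((e ∩ S).card) * ω e)
        = (∏ e : Finset (Fin N), ((-1 : ℝ) ^ ((e ∩ S).card)) ^ (n e)) * hermiteProd n ω := by
      unfold hermiteProd
      rw [← Finset.prod_mul_distrib]
      exact Finset.prod_congr rfl fun e _ => hermiteFn_sign (hs e) (n e) (ω e)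
    rw [h1, gibbs_comp_flip, h2, gibbs_const_mul, h3]
    ring
  have hflip := integral_gaussianPi_comp_flip (fun e => (-1 : ℝ) ^ ((e ∩ S).card)) hs
    (fun ω => gibbs β (ham Edges ρ ω) (fun σ => spin (σ i) * spin (σ j)) * hermiteProd n ω)
  unfold twoPointCoeff
  conv_lhs => rw [← hflip]
  simp only [hpt]
  rw [MeasureTheory.integral_const_mul]

lemma exists_berge_path (E : Finset (Finset (Fin N))) (i j : Fin N)
    (h : Relation.ReflTransGen (fun v w => ∃ e ∈ E, v ∈ e ∧ w ∈ e) i j) :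
    ∃ (ℓ : ℕ) (vs : Fin (ℓ + 1) → Fin N) (es : Fin ℓ → Finset (Fin N)),
      IsBergePath E ℓ vs es i j ∧ ℓ ≤ E.card := by
  classical
  have hex : ∃ ℓ : ℕ, ∃ (vs : ℕ → Fin N) (es : ℕ → Finset (Fin N)),
      vs 0 = i ∧ vs ℓ = j ∧ ∀ k, k < ℓ → es k ∈ E ∧ vs k ∈ es k ∧ vs (k + 1) ∈ es k := by
    induction h with
    | refl => exact ⟨0, fun _ => i, fun _ => ∅, rfl, rfl, fun k hk => absurd hk (Nat.not_lt_zero k)⟩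
    | @tail b c hab hbc ih =>
        obtain ⟨ℓ, vs, es, h0, hl, hstep⟩ := ih
        obtain ⟨e, heE, hbe, hce⟩ := hbc
        refine ⟨ℓ + 1, fun k => if k ≤ ℓ then vs k else c,
          fun k => if k = ℓ then e else es k, ?_, ?_, ?_⟩
        · dsimp only
          rw [if_pos (Nat.zero_le ℓ)]; exact h0
        · dsimp only
          rw [if_neg (by omega)]
        · intro k hk
          dsimp only
          rcases Nat.lt_succ_iff_lt_or_eq.mp hk with h1 | h1
          · rw [if_neg (by omega), if_pos (by omega), if_pos (by omega)]
            exact hstep k h1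
          · subst h1
            rw [if_pos rfl, if_pos (le_refl k), if_neg (by omega), hl]
            exact ⟨heE, hbe, hce⟩
  obtain ⟨ℓ₀, hfound⟩ : ∃ L, L = Nat.find hex := ⟨_, rfl⟩
  have hspec := Nat.find_spec hex
  rw [← hfound] at hspec
  obtain ⟨vs, es, h0, hl, hstep⟩ := hspec
  have hmin : ∀ m, m < ℓ₀ → ¬ ∃ (vs : ℕ → Fin N) (es : ℕ → Finset (Fin N)),
      vs 0 = i ∧ vs m = j ∧ ∀ k, k < m → es k ∈ E ∧ vs k ∈ es k ∧ vs (k + 1) ∈ es k := by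
    rw [hfound]
    exact fun m hm => Nat.find_min hex hm
  have hv : ∀ a b, a < b → b ≤ ℓ₀ → vs a ≠ vs b := by
    intro a b hab hbl heq
    refine hmin (ℓ₀ - (b - a)) (by omega) ?_
    refine ⟨fun k => if k ≤ a then vs k else vs (k + (b - a)),
      fun k => if k < a then es k else es (k + (b - a)), ?_, ?_, ?_⟩
    · dsimp only; rw [if_pos (Nat.zero_le a)]; exact h0
    · dsimp only
      by_cases hc : ℓ₀ - (b - a) ≤ a
      · have h1 : ℓ₀ - (b - a) = a := by omega
        have h2 : b = ℓ₀ := by omega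
        rw [if_pos hc, h1, heq, h2, hl]
      · rw [if_neg hc, show ℓ₀ - (b - a) + (b - a) = ℓ₀ by omega, hl]
    · intro k hk
      dsimp only
      rcases lt_trichotomy k a with h1 | h1 | h1
      · rw [if_pos h1, if_pos (le_of_lt h1), if_pos (by omega)]
        exact hstep k (by omega)
      · subst h1
        rw [if_neg (lt_irrefl k), if_pos (le_refl k),
          show k + (b - k) = b by omega, if_neg (by omega),
          show k + 1 + (b - k) = b + 1 by omega, heq]
        exact hstep b (by omega)
      · rw [if_neg (by omega), if_neg (by omega), if_neg (by omega),
          show k + 1 + (b - a) = k + (b - a) + 1 by omega]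
        exact hstep (k + (b - a)) (by omega)
  have he : ∀ a b, a < b → b < ℓ₀ → es a ≠ es b := by
    intro a b hab hbl heq
    refine hmin (ℓ₀ - (b - a)) (by omega) ?_
    refine ⟨fun k => if k ≤ a then vs k else vs (k + (b - a)),
      fun k => if k ≤ a then es k else es (k + (b - a)), ?_, ?_, ?_⟩
    · dsimp only; rw [if_pos (Nat.zero_le a)]; exact h0
    · dsimp only
      rw [if_neg (by omega), show ℓ₀ - (b - a) + (b - a) = ℓ₀ by omega, hl]
    · intro k hk
      dsimp only
      rcases lt_trichotomy k a with h1 | h1 | h1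
      · rw [if_pos (le_of_lt h1), if_pos (le_of_lt h1), if_pos (by omega)]
        exact hstep k (by omega)
      · subst h1
        rw [if_pos (le_refl k), if_pos (le_refl k), if_neg (by omega),
          show k + 1 + (b - k) = b + 1 by omega]
        refine ⟨(hstep k (by omega)).1, (hstep k (by omega)).2.1, ?_⟩
        rw [heq]
        exact (hstep b (by omega)).2.2
      · rw [if_neg (by omega), if_neg (by omega), if_neg (by omega),
          show k + 1 + (b - a) = k + (b - a) + 1 by omega]
        exact hstep (k + (b - a)) (by omega)
  refine ⟨ℓ₀, fun k => vs k.1, fun k => es k.1, ⟨?_, ?_, ?_, ?_, ?_, ?_⟩, ?_⟩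
  · intro a b hab
    rcases lt_trichotomy a.1 b.1 with h1 | h1 | h1
    · exact absurd hab (hv a.1 b.1 h1 (by omega))
    · exact Fin.ext h1
    · exact absurd hab.symm (hv b.1 a.1 h1 (by omega))
  · intro a b hab
    rcases lt_trichotomy a.1 b.1 with h1 | h1 | h1
    · exact absurd hab (he a.1 b.1 h1 b.isLt)
    · exact Fin.ext h1
    · exact absurd hab.symm (he b.1 a.1 h1 a.isLt)
  · exact fun k => (hstep k.1 k.isLt).1
  · exact h0
  · simpa using hl
  · intro k
    refine ⟨(hstep k.1 k.isLt).2.1, ?_⟩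
    have := (hstep k.1 k.isLt).2.2
    simpa using this
  · have : (Finset.univ : Finset (Fin ℓ₀)).card ≤ E.card := by
      refine Finset.card_le_card_of_injOn (fun k => es k.1)
        (fun k _ => (hstep k.1 k.isLt).1) ?_
      intro a _ b _ hab
      rcases lt_trichotomy a.1 b.1 with h1 | h1 | h1
      · exact absurd hab (he a.1 b.1 h1 b.isLt)
      · exact Fin.ext h1
      · exact absurd hab.symm (he b.1 a.1 h1 a.isLt)
    simpa using this

end Stmt1Aux

/-- In the mixed even `p`-spin short-range model, a nonvanishing
Fourier–Hermite coefficient `φ̂_{ij}(n) ≠ 0` forces `i, j ∈ V(n)`, the existence of a Berge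
path from `i` to `j` inside `G(n)`, and `|E(n)| ≥ d(i,j)`. -/
theorem stmt1
    (N Δ : ℕ) (hN : 1 ≤ N) (hΔ : 2 ≤ Δ)
    (Edges : Finset (Finset (Fin N)))
    (hcard : ∀ e ∈ Edges, 2 ≤ e.card ∧ e.card ≤ Δ)
    (heven : ∀ e ∈ Edges, Even e.card)
    (ρ : ℕ → ℝ → ℝ) (hρmeas : ∀ p, Measurable (ρ p))
    (hρodd : ∀ p x, ρ p (-x) = - ρ p x)
    (β : ℝ) (hβ : 0 ≤ β)
    (i j : Fin N) (hij : i ≠ j)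
    (n : Finset (Fin N) → ℕ) (hsupp : ∀ e, n e ≠ 0 → e ∈ Edges)
    (hne : twoPointCoeff Edges ρ β i j n ≠ 0) :
    i ∈ Vsupp n ∧ j ∈ Vsupp n ∧
      (∃ (ℓ : ℕ) (vs : Fin (ℓ + 1) → Fin N) (es : Fin ℓ → Finset (Fin N)),
        IsBergePath (Esupp n) ℓ vs es i j) ∧
      hdist Edges i j ≤ ((Esupp n).card : ℕ∞) := by
  classical
  -- the sign identity forces the "gauge factor" to be `1` for every vertex set `S`
  have hc1 : ∀ S : Finset (Fin N),
      (if i ∈ S then (-1 : ℝ) else 1) * (if j ∈ S then (-1 : ℝ) else 1) *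
        ∏ e : Finset (Fin N), ((-1 : ℝ) ^ ((e ∩ S).card)) ^ (n e) = 1 := by
    intro S
    have h := twoPointCoeff_flip Edges ρ hρodd β i j n S
    have h2 : (((if i ∈ S then (-1 : ℝ) else 1) * (if j ∈ S then (-1 : ℝ) else 1) *
        ∏ e : Finset (Fin N), ((-1 : ℝ) ^ ((e ∩ S).card)) ^ (n e)) - 1) *
          twoPointCoeff Edges ρ β i j n = 0 := by
      have h3 : (((if i ∈ S then (-1 : ℝ) else 1) * (if j ∈ S then (-1 : ℝ) else 1) *
          ∏ e : Finset (Fin N), ((-1 : ℝ) ^ ((e ∩ S).card)) ^ (n e)) - 1) *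
            twoPointCoeff Edges ρ β i j n
          = ((if i ∈ S then (-1 : ℝ) else 1) * (if j ∈ S then (-1 : ℝ) else 1) *
              ∏ e : Finset (Fin N), ((-1 : ℝ) ^ ((e ∩ S).card)) ^ (n e)) *
              twoPointCoeff Edges ρ β i j n - twoPointCoeff Edges ρ β i j n := by ring
      rw [h3, ← h, sub_self]
    rcases mul_eq_zero.mp h2 with h3 | h3
    · linarith [h3]
    · exact absurd h3 hne
  have hmemV : ∀ v : Fin N, v ∈ Vsupp n ↔ ∃ e, n e ≠ 0 ∧ v ∈ e := by
    intro v
    simp only [Vsupp, Esupp, Finset.mem_biUnion, Finset.mem_filter, Finset.mem_univ,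
      true_and, id]
  have hiV : i ∈ Vsupp n := by
    by_contra hi
    have h := hc1 {i}
    have hprod : ∏ e : Finset (Fin N),
        ((-1 : ℝ) ^ ((e ∩ ({i} : Finset (Fin N))).card)) ^ (n e) = 1 := by
      refine Finset.prod_eq_one fun e _ => ?_
      by_cases h0 : n e = 0
      · rw [h0, pow_zero]
      · have hie : i ∉ e := fun hie => hi ((hmemV i).mpr ⟨e, h0, hie⟩)
        rw [Finset.inter_singleton_of_notMem hie]
        simp
    rw [hprod, if_pos (Finset.mem_singleton_self i),
      if_neg (fun hmem : j ∈ ({i} : Finset (Fin N)) =>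
        hij (Finset.mem_singleton.mp hmem).symm)] at h
    norm_num at h
  have hjV : j ∈ Vsupp n := by
    by_contra hj
    have h := hc1 {j}
    have hprod : ∏ e : Finset (Fin N),
        ((-1 : ℝ) ^ ((e ∩ ({j} : Finset (Fin N))).card)) ^ (n e) = 1 := by
      refine Finset.prod_eq_one fun e _ => ?_
      by_cases h0 : n e = 0
      · rw [h0, pow_zero]
      · have hje : j ∉ e := fun hje => hj ((hmemV j).mpr ⟨e, h0, hje⟩)
        rw [Finset.inter_singleton_of_notMem hje]
        simp
    rw [hprod, if_pos (Finset.mem_singleton_self j),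
      if_neg (fun hmem : i ∈ ({j} : Finset (Fin N)) =>
        hij (Finset.mem_singleton.mp hmem))] at h
    norm_num at h
  -- connectivity: take `S` to be the connected component of `i` in `G(n)`
  have hRTG : Relation.ReflTransGen (fun v w => ∃ e ∈ Esupp n, v ∈ e ∧ w ∈ e) i j := by
    by_contra hj
    set C : Finset (Fin N) := Finset.univ.filter
      (fun w => Relation.ReflTransGen (fun v w => ∃ e ∈ Esupp n, v ∈ e ∧ w ∈ e) i w) with hC
    have hiC : i ∈ C := Finset.mem_filter.mpr ⟨Finset.mem_univ i, Relation.ReflTransGen.refl⟩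
    have hjC : j ∉ C := fun hjc => hj (Finset.mem_filter.mp hjc).2
    have h := hc1 C
    have hprod : ∏ e : Finset (Fin N), ((-1 : ℝ) ^ ((e ∩ C).card)) ^ (n e) = 1 := by
      refine Finset.prod_eq_one fun e _ => ?_
      by_cases h0 : n e = 0
      · rw [h0, pow_zero]
      · have heven2 : Even ((e ∩ C).card) := by
          by_cases hne2 : (e ∩ C).Nonempty
          · obtain ⟨v, hv⟩ := hne2
            have hve : v ∈ e := (Finset.mem_inter.mp hv).1
            have hvC : v ∈ C := (Finset.mem_inter.mp hv).2
            have hsub : e ⊆ C := by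
              intro w hw
              refine Finset.mem_filter.mpr ⟨Finset.mem_univ w, ?_⟩
              exact Relation.ReflTransGen.tail (Finset.mem_filter.mp hvC).2
                ⟨e, Finset.mem_filter.mpr ⟨Finset.mem_univ e, h0⟩, hve, hw⟩
            rw [Finset.inter_eq_left.mpr hsub]
            exact heven e (hsupp e h0)
          · rw [Finset.not_nonempty_iff_eq_empty.mp hne2, Finset.card_empty]
            exact Even.zero
        rw [heven2.neg_one_pow, one_pow]
    rw [hprod, if_pos hiC, if_neg hjC] at h
    norm_num at h
  obtain ⟨ℓ, vs, es, hpath, hlen⟩ := exists_berge_path (Esupp n) i j hRTG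
  have hpath' : IsBergePath Edges ℓ vs es i j := by
    obtain ⟨a1, a2, a3, a4, a5, a6⟩ := hpath
    exact ⟨a1, a2, fun k => hsupp (es k) (Finset.mem_filter.mp (a3 k)).2, a4, a5, a6⟩
  refine ⟨hiV, hjV, ⟨ℓ, vs, es, hpath⟩, ?_⟩
  have h1 : hdist Edges i j ≤ (ℓ : ℕ∞) := by
    apply sInf_le
    exact ⟨ℓ, vs, es, hpath', rfl⟩
  exact le_trans h1 (by exact_mod_cast hlen)
end
end

section
/- In the Edwards–Anderson model on a finite simple graph G = ([N], E): let i ≠ j ∈ [N] and S ⊆ E. If the graph ([N], S) contains no path connecting i and j, then the conditional expectation E[⟨σ_i σ_j⟩ | σ(J_e : e ∈ S)] = 0 almost surely. -/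
open MeasureTheory ProbabilityTheory Real Finset

noncomputable section

/-! ### Spin models on hypergraphs -/

variable {N : ℕ}

/-! Let `A` be the set of vertices joined to `i` by a path in `S`. Flipping the spins in `A` is a
bijection of configurations which, because `ρ` is odd, turns `H_J` into `H_{J'}`, where `J'`
negates `J_e` exactly on the edges `e` with `|e ∩ A|` odd, and which negates `σ_i σ_j`. No edge of
`S` is cut by `A`, so `J ↦ J'` fixes `(J_e)_{e ∈ S}`; it also preserves the Gaussian law, while
`⟨σ_i σ_j⟩(J') = -⟨σ_i σ_j⟩(J)`. Hence every integral of `⟨σ_i σ_j⟩` over an event in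
`σ(J_e : e ∈ S)` equals its own negative. -/

theorem condExp_ae_eq_zero_of_comp_eq_neg {α : Type*} {m m₀ : MeasurableSpace α}
    {μ : Measure α} [IsFiniteMeasure μ] (hm : m ≤ m₀) (T : α ≃ᵐ α) (hT : MeasurePreserving T μ μ)
    (hTm : ∀ s, MeasurableSet[m] s → T ⁻¹' s = s) {f : α → ℝ} (hf : ∀ x, f (T x) = -f x) :
    μ[f | m] =ᵐ[μ] 0 := by
  by_cases hfi : Integrable f μ
  swap
  · rw [condExp_of_not_integrable hfi]
  have : IsFiniteMeasure (μ.trim hm) := isFiniteMeasure_trim hm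
  refine (ae_eq_condExp_of_forall_setIntegral_eq hm hfi (fun _ _ _ => integrableOn_zero)
    (fun s hs _ => ?_) aestronglyMeasurable_const).symm
  have hneg : ∫ x in s, f x ∂μ = -∫ x in s, f x ∂μ := by
    calc ∫ x in s, f x ∂μ = ∫ x in T ⁻¹' s, f (T x) ∂μ :=
          (hT.setIntegral_preimage_emb T.measurableEmbedding f s).symm
      _ = -∫ x in s, f x ∂μ := by simp only [hTm s hs, hf, integral_neg]
  rw [integral_zero]
  linarith

section SignFlip

variable {ι : Type*} [DecidableEq ι]

def negOn (s : Finset ι) : (ι → ℝ) ≃ᵐ (ι → ℝ) :=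
  MeasurableEquiv.piCongrRight fun e =>
    if e ∈ s then MeasurableEquiv.neg ℝ else MeasurableEquiv.refl ℝ

theorem negOn_apply (s : Finset ι) (ω : ι → ℝ) (e : ι) :
    negOn s ω e = if e ∈ s then -ω e else ω e := by
  change (if e ∈ s then MeasurableEquiv.neg ℝ else MeasurableEquiv.refl ℝ) (ω e) = _
  split_ifs <;> rfl

theorem measurePreserving_negOn [Fintype ι] (s : Finset ι) :
    MeasurePreserving (negOn s) (gaussianPi ι) (gaussianPi ι) := by
  refine measurePreserving_pi _ _ fun e => ?_
  dsimp only
  split_ifs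
  · refine ⟨measurable_neg, ?_⟩
    simpa using gaussianReal_map_neg (μ := 0) (v := 1)
  · exact MeasurePreserving.id _

end SignFlip

section SpinFlip

def flipOn (A : Finset (Fin N)) (σ : Fin N → Bool) : Fin N → Bool :=
  fun v => decide (v ∈ A) ^^ σ v

theorem flipOn_involutive (A : Finset (Fin N)) : Function.Involutive (flipOn A) := by
  intro σ
  funext v
  simp [flipOn]

theorem spin_flipOn (A : Finset (Fin N)) (σ : Fin N → Bool) (v : Fin N) :
    spin (flipOn A σ v) = (if v ∈ A then -1 else 1) * spin (σ v) := by
  by_cases hv : v ∈ A <;> cases hσ : σ v <;> simp [flipOn, spin, hv, hσ]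

theorem sigEdge_flipOn (A : Finset (Fin N)) (σ : Fin N → Bool) (e : Finset (Fin N)) :
    sigEdge (flipOn A σ) e = (-1) ^ #(e ∩ A) * sigEdge σ e := by
  simp only [sigEdge, spin_flipOn, prod_mul_distrib, prod_ite_mem, prod_const]

def oddEdges (A : Finset (Fin N)) : Finset (Finset (Fin N)) :=
  univ.filter fun e => Odd #(e ∩ A)

theorem ham_negOn_oddEdges (Edges : Finset (Finset (Fin N))) {ρ : ℕ → ℝ → ℝ}
    (hρ : ∀ k x, ρ k (-x) = -ρ k x) (A : Finset (Fin N)) (J : Finset (Fin N) → ℝ)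
    (σ : Fin N → Bool) :
    ham Edges ρ (negOn (oddEdges A) J) σ = ham Edges ρ J (flipOn A σ) := by
  refine sum_congr rfl fun e _ => ?_
  rw [negOn_apply, sigEdge_flipOn]
  by_cases he : Odd #(e ∩ A)
  · simp [oddEdges, he, he.neg_one_pow, hρ]
  · simp [oddEdges, he, (Nat.not_odd_iff_even.mp he).neg_one_pow]

theorem gibbs_comp_perm (β : ℝ) (H f : (Fin N → Bool) → ℝ) (φ : Equiv.Perm (Fin N → Bool)) :
    gibbs β (fun σ => H (φ σ)) f = gibbs β H (fun σ => f (φ.symm σ)) := by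
  unfold gibbs
  rw [← Equiv.sum_comp φ (fun σ => f (φ.symm σ) * Real.exp (β * H σ)),
    ← Equiv.sum_comp φ (fun σ => Real.exp (β * H σ))]
  simp

theorem gibbs_neg (β : ℝ) (H f : (Fin N → Bool) → ℝ) :
    gibbs β H (fun σ => -f σ) = -gibbs β H f := by
  simp only [gibbs, neg_mul, sum_neg_distrib, neg_div]

theorem gibbs_twoPoint_negOn_oddEdges (Edges : Finset (Finset (Fin N))) {ρ : ℕ → ℝ → ℝ}
    (hρ : ∀ k x, ρ k (-x) = -ρ k x) (β : ℝ) {A : Finset (Fin N)} {i j : Fin N} (hi : i ∈ A)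
    (hj : j ∉ A) (J : Finset (Fin N) → ℝ) :
    gibbs β (ham Edges ρ (negOn (oddEdges A) J)) (fun σ => spin (σ i) * spin (σ j)) =
      -gibbs β (ham Edges ρ J) (fun σ => spin (σ i) * spin (σ j)) := by
  have hH : ham Edges ρ (negOn (oddEdges A) J) = fun σ => ham Edges ρ J (flipOn A σ) :=
    funext (ham_negOn_oddEdges Edges hρ A J)
  rw [hH, ← gibbs_neg]
  refine (gibbs_comp_perm β (ham Edges ρ J) _ (flipOn_involutive A).toPerm).trans ?_
  congr 1
  funext σ
  simp [spin_flipOn, hi, hj]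

end SpinFlip

section PrimalGraph

variable {V : Type*}

def primalGraph (S : Finset (Finset V)) : SimpleGraph V where
  Adj v w := v ≠ w ∧ ∃ e ∈ S, v ∈ e ∧ w ∈ e
  symm := ⟨fun _ _ ⟨hne, e, he, hv, hw⟩ => ⟨hne.symm, e, he, hw, hv⟩⟩
  loopless := ⟨fun _ h => h.1 rfl⟩

theorem primalGraph_adj {S : Finset (Finset V)} {v w : V} :
    (primalGraph S).Adj v w ↔ v ≠ w ∧ ∃ e ∈ S, v ∈ e ∧ w ∈ e :=
  Iff.rfl

theorem primalGraph_reachable_of_mem {S : Finset (Finset V)} {e : Finset V} (he : e ∈ S)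
    {v w : V} (hv : v ∈ e) (hw : w ∈ e) : (primalGraph S).Reachable v w := by
  by_cases hvw : v = w
  · exact hvw ▸ SimpleGraph.Reachable.refl v
  · exact (primalGraph_adj.mpr ⟨hvw, e, he, hv, hw⟩).reachable

theorem even_card_inter_of_mem_imp [DecidableEq V] {e A : Finset V} (he : Even #e)
    (hA : ∀ v ∈ e, ∀ w ∈ e, v ∈ A → w ∈ A) : Even #(e ∩ A) := by
  rcases em (∃ v ∈ e, v ∈ A) with ⟨v, hv, hvA⟩ | hmeet
  · rwa [inter_eq_left.mpr fun w hw => hA v hv w hw hvA]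
  · rw [disjoint_iff_inter_eq_empty.mp (disjoint_left.mpr fun v hv hvA => hmeet ⟨v, hv, hvA⟩)]
    exact Even.zero

end PrimalGraph

theorem exists_isBergePath_of_reachable {S : Finset (Finset (Fin N))} (hS : ∀ e ∈ S, #e = 2)
    {u v : Fin N} (h : (primalGraph S).Reachable u v) :
    ∃ (ℓ : ℕ) (vs : Fin (ℓ + 1) → Fin N) (es : Fin ℓ → Finset (Fin N)),
      IsBergePath S ℓ vs es u v := by
  obtain ⟨q, hq⟩ := h.some.toPath
  have hinj : ∀ a b, a ≤ q.length → b ≤ q.length → q.getVert a = q.getVert b → a = b :=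
    fun a b ha hb hab => hq.getVert_injOn ha hb hab
  have hstep : ∀ k : Fin q.length,
      ∃ e ∈ S, q.getVert k ∈ e ∧ q.getVert (k + 1) ∈ e := fun k =>
    (primalGraph_adj.mp (q.adj_getVert_succ k.isLt)).2
  choose es hesS hes using hstep
  refine ⟨q.length, fun k => q.getVert k, es, fun k l hkl => ?_, fun k l hkl => ?_, hesS,
    q.getVert_zero, ?_, fun k => hes k⟩
  · exact Fin.ext (hinj k l (Nat.lt_succ_iff.1 k.isLt) (Nat.lt_succ_iff.1 l.isLt) hkl)
  · have hpair : es k = {q.getVert k, q.getVert (k + 1)} := by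
      refine (eq_of_subset_of_card_le ?_ ?_).symm
      · simp [insert_subset_iff, (hes k).1, (hes k).2]
      · rw [hS _ (hesS k), card_pair fun h => by
          have := hinj _ _ k.isLt.le k.isLt h; omega]
    have h1 := (hes l).1
    have h2 := (hes l).2
    rw [← hkl, hpair, mem_insert, mem_singleton] at h1 h2
    have := k.isLt; have := l.isLt
    refine Fin.ext ?_
    rcases h1 with h1 | h1 <;> rcases h2 with h2 | h2 <;>
      have e1 := hinj _ _ (by omega) (by omega) h1 <;>
      have e2 := hinj _ _ (by omega) (by omega) h2 <;> omega
  · simp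

theorem stmt3_general
    (N : ℕ)
    (Edges : Finset (Finset (Fin N))) (hcard : ∀ e ∈ Edges, e.card = 2)
    (ρ : ℝ → ℝ) (hρodd : ∀ x, ρ (-x) = - ρ x)
    (β : ℝ)
    (i j : Fin N)
    (S : Finset (Finset (Fin N))) (hS : S ⊆ Edges)
    (hnopath : ¬ ∃ (ℓ : ℕ) (vs : Fin (ℓ + 1) → Fin N) (es : Fin ℓ → Finset (Fin N)),
      IsBergePath S ℓ vs es i j) :
    (gaussianPi (Finset (Fin N)))[
        (fun ω => gibbs β (ham Edges (fun _ => ρ) ω) fun σ => spin (σ i) * spin (σ j)) |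
        MeasurableSpace.comap
          (fun (ω : Finset (Fin N) → ℝ) (e : {e : Finset (Fin N) // e ∈ S}) => ω e.1)
          inferInstance]
      =ᵐ[gaussianPi (Finset (Fin N))] 0 := by
  classical
  set A : Finset (Fin N) := univ.filter ((primalGraph S).Reachable i)
  have hiA : i ∈ A := by simp [A]
  have hjA : j ∉ A := fun hj => hnopath <|
    exists_isBergePath_of_reachable (fun e he => hcard e (hS he)) (mem_filter.mp hj).2
  have hS_notMem : ∀ e ∈ S, e ∉ oddEdges A := fun e he => by
    simpa [oddEdges] using even_card_inter_of_mem_imp (hcard e (hS he) ▸ even_two)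
      fun v hv w hw hvA => by
        simpa [A] using (mem_filter.mp hvA).2.trans (primalGraph_reachable_of_mem he hv hw)
  have hfix : ∀ J, (fun e : {e // e ∈ S} => negOn (oddEdges A) J e.1) = fun e => J e.1 :=
    fun J => funext fun e => by rw [negOn_apply, if_neg (hS_notMem e e.2)]
  refine condExp_ae_eq_zero_of_comp_eq_neg
    (measurable_pi_lambda _ fun e => measurable_pi_apply e.1).comap_le
    (negOn (oddEdges A)) (measurePreserving_negOn _) ?_
    (gibbs_twoPoint_negOn_oddEdges Edges (fun _ => hρodd) β hiA hjA)
  rintro _ ⟨C, -, rfl⟩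
  ext J
  simp only [Set.mem_preimage, hfix]

/-- In the Edwards–Anderson model on a finite simple graph, if `S ⊆ E`
contains no path connecting `i` and `j`, then `E[⟨σ_i σ_j⟩ | J_e, e ∈ S] = 0` a.s. -/
theorem stmt3
    (N : ℕ) (hN : 1 ≤ N)
    (Edges : Finset (Finset (Fin N))) (hcard : ∀ e ∈ Edges, e.card = 2)
    (ρ : ℝ → ℝ) (hρmeas : Measurable ρ) (hρodd : ∀ x, ρ (-x) = - ρ x)
    (β : ℝ) (hβ : 0 ≤ β)
    (i j : Fin N) (hij : i ≠ j)
    (S : Finset (Finset (Fin N))) (hS : S ⊆ Edges)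
    (hnopath : ¬ ∃ (ℓ : ℕ) (vs : Fin (ℓ + 1) → Fin N) (es : Fin ℓ → Finset (Fin N)),
      IsBergePath S ℓ vs es i j) :
    (gaussianPi (Finset (Fin N)))[
        (fun ω => gibbs β (ham Edges (fun _ => ρ) ω) fun σ => spin (σ i) * spin (σ j)) |
        MeasurableSpace.comap
          (fun (ω : Finset (Fin N) → ℝ) (e : {e : Finset (Fin N) // e ∈ S}) => ω e.1)
          inferInstance]
      =ᵐ[gaussianPi (Finset (Fin N))] 0 :=
  stmt3_general N Edges hcard ρ hρodd β i j S hS hnopath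
end
end
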